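/- arXiv:2103.09146 — 2 statements merged into one kernel-verified Lean document; each statement's English description precedes it below -/
import Mathlib

section
/- Any Jastrow state on N spins, with amplitudes ψ(v) = exp(Σ_j c_j v_j + Σ_{j<k} V_{jk} v_j v_k) for v ∈ {+1,-1}^N, arises as the limit as S → ∞ of normalized RBM amplitudes with M = N hidden units: specifically, with weights w_{ii} = S, w_{ij} = (V_{ij}+V_{ji})/2 for i≠j (with V symmetrized), visible biases a, hidden biases b satisfying a+b = c, one has lim_{S→∞} e^{-NS} Σ_h exp(Σ_j a_j v_j + Σ_i b_i h_i + Σ_{i,j} w_{ij} h_i v_j) = exp(Σ_i (a_i+b_i) v_i + Σ_{i≠j} w_{ij} v_i v_j), where the w_{ij} for i≠j are the fixed off-diagonal weights. -/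
open scoped BigOperators

/-- spin value of a Boolean hidden variable: `true ↦ 1`, `false ↦ -1` -/
noncomputable def spin (b : Bool) : ℝ := if b then 1 else -1

/-- any Jastrow state arises as the `S → ∞` limit of (rescaled) RBM
amplitudes with `M = N` hidden units, diagonal weights `w_{ii} = S`, symmetrized
off-diagonal weights `(V_{ij}+V_{ji})/2`, and biases with `a + b = c`. -/
theorem jastrow_as_limit_of_rbm (N : ℕ) (c : Fin N → ℝ) (V : Fin N → Fin N → ℝ)
    (hV : ∀ i j : Fin N, ¬ i < j → V i j = 0)
    (a b : Fin N → ℝ) (hab : ∀ i, a i + b i = c i)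
    (v : Fin N → ℝ) (hv : ∀ j, v j = 1 ∨ v j = -1) :
    Filter.Tendsto
      (fun S : ℝ => Real.exp (-(N * S)) *
        ∑ h : Fin N → Bool,
          Real.exp (∑ j, a j * v j + ∑ i, b i * spin (h i)
            + ∑ i, ∑ j, (if i = j then S else (V i j + V j i) / 2) * spin (h i) * v j))
      Filter.atTop
      (nhds (Real.exp (∑ i, (a i + b i) * v i
        + ∑ i, ∑ j, (if i = j then 0 else (V i j + V j i) / 2) * v i * v j))) := by
  classical
  set w : Fin N → Fin N → ℝ := fun i j => (V i j + V j i) / 2 with hw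
  -- constant part of the exponent
  set C : (Fin N → Bool) → ℝ := fun h =>
    (∑ j, a j * v j) + (∑ i, b i * spin (h i))
      + ∑ i, ∑ j, (if i = j then 0 else w i j) * spin (h i) * v j with hC
  -- slope of the exponent
  set d : (Fin N → Bool) → ℝ := fun h => (∑ i, spin (h i) * v i) - N with hd
  have hspin : ∀ h : Fin N → Bool, ∀ i, spin (h i) = 1 ∨ spin (h i) = -1 := by
    intro h i; cases h i <;> simp [spin]
  have hvsq : ∀ i, v i * v i = 1 := by
    intro i; rcases hv i with h | h <;> rw [h] <;> norm_num
  -- the distinguished hidden configuration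
  set hstar : Fin N → Bool := fun i => decide (v i = 1) with hhstar
  have hspin_star : ∀ i, spin (hstar i) = v i := by
    intro i
    rcases hv i with h | h
    · have ht : hstar i = true := by simp [hhstar, h]
      rw [ht]; simp [spin, h]
    · have hne : v i ≠ 1 := by rw [h]; norm_num
      have hf : hstar i = false := by simp [hhstar, hne]
      rw [hf]; simp [spin, h]
  -- key algebraic rewriting of the function
  have key : (fun S : ℝ => Real.exp (-(N * S)) *
        ∑ h : Fin N → Bool,
          Real.exp (∑ j, a j * v j + ∑ i, b i * spin (h i)
            + ∑ i, ∑ j, (if i = j then S else (V i j + V j i) / 2) * spin (h i) * v j))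
      = fun S : ℝ => ∑ h : Fin N → Bool, Real.exp (C h + S * d h) := by
    funext S
    rw [Finset.mul_sum]
    refine Finset.sum_congr rfl fun h _ => ?_
    rw [← Real.exp_add]
    congr 1
    have split : ∑ i, ∑ j, (if i = j then S else (V i j + V j i) / 2) * spin (h i) * v j
        = S * (∑ i, spin (h i) * v i)
          + ∑ i, ∑ j, (if i = j then 0 else w i j) * spin (h i) * v j := by
      rw [Finset.mul_sum, ← Finset.sum_add_distrib]
      refine Finset.sum_congr rfl fun i _ => ?_
      have step : ∀ j, (if i = j then S else (V i j + V j i) / 2) * spin (h i) * v j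
          = (if i = j then S * (spin (h i) * v j) else 0)
            + (if i = j then 0 else w i j) * spin (h i) * v j := by
        intro j; by_cases hij : i = j <;> simp [hij, hw] <;> ring
      simp only [step, Finset.sum_add_distrib, Finset.sum_ite_eq, Finset.mem_univ, if_true]
    rw [split, hC, hd]
    ring
  rw [key]
  -- limit of each summand
  have hterm : ∀ h : Fin N → Bool,
      Filter.Tendsto (fun S : ℝ => Real.exp (C h + S * d h)) Filter.atTop
        (nhds (if h = hstar then Real.exp (C hstar) else 0)) := by
    intro h
    by_cases hh : h = hstar
    · rw [if_pos hh, hh]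
      have hd0 : d hstar = 0 := by
        rw [hd]
        have h1 : ∀ i : Fin N, spin (hstar i) * v i = 1 := fun i => by
          rw [hspin_star i]; exact hvsq i
        simp [h1]
      simp only [hd0, mul_zero, add_zero]
      exact tendsto_const_nhds
    · rw [if_neg hh]
      have hdneg : d h < 0 := by
        rw [hd, sub_neg]
        have hlt : (∑ i, spin (h i) * v i) < ∑ _i : Fin N, (1 : ℝ) := by
          obtain ⟨i0, hi0⟩ : ∃ i, h i ≠ hstar i := by
            by_contra hcon
            push_neg at hcon
            exact hh (funext hcon)
          refine Finset.sum_lt_sum (fun i _ => ?_) ⟨i0, Finset.mem_univ i0, ?_⟩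
          · rcases hspin h i with hs | hs <;> rcases hv i with hvi | hvi <;>
              rw [hs, hvi] <;> norm_num
          · have : spin (h i0) = - v i0 := by
              rcases hv i0 with hvi | hvi
              · have : hstar i0 = true := by simp [hhstar, hvi]
                have hbi : h i0 = false := by
                  cases hb : h i0
                  · rfl
                  · exact absurd (by rw [hb, this]) hi0
                simp [hbi, spin, hvi]
              · have h1 : v i0 ≠ 1 := by rw [hvi]; norm_num
                have : hstar i0 = false := by simp [hhstar, h1]
                have hbi : h i0 = true := by
                  cases hb : h i0
                  · exact absurd (by rw [hb, this]) hi0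
                  · rfl
                simp [hbi, spin, hvi]
            rw [this]
            have := hvsq i0
            nlinarith
        calc (∑ i, spin (h i) * v i) < ∑ _i : Fin N, (1 : ℝ) := hlt
          _ = N := by simp
      have h1 : Filter.Tendsto (fun S : ℝ => C h + S * d h) Filter.atTop Filter.atBot := by
        apply Filter.tendsto_atBot_add_const_left
        exact Filter.Tendsto.atTop_mul_const_of_neg hdneg Filter.tendsto_id
      exact (Real.tendsto_exp_atBot).comp h1
  have hsum := tendsto_finset_sum Finset.univ (fun h _ => hterm h)
  convert hsum using 2
  rw [Finset.sum_ite_eq' Finset.univ hstar (fun _ => Real.exp (C hstar))]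
  simp only [Finset.mem_univ, if_true]
  congr 1
  rw [hC]
  have e1 : ∑ i, (a i + b i) * v i = (∑ j, a j * v j) + ∑ i, b i * spin (hstar i) := by
    rw [← Finset.sum_add_distrib]
    exact Finset.sum_congr rfl fun i _ => by rw [hspin_star i]; ring
  rw [e1]
  congr 1
  refine Finset.sum_congr rfl fun i _ => Finset.sum_congr rfl fun j _ => by
    rw [hspin_star i, hw]
end

section
/- A single hypergraph-state hyperedge correlator is exactly representable by one hidden unit: for a subset Z = {j₁,...,j_p} of p spins, the function Φ(q) = (−1)^{q_{j₁}·q_{j₂}⋯q_{j_p}} on q ∈ {0,1}^N equals Σ_{h∈{0,1}} Π_{j=1}^N C^{(j)}_{h,q_j}, where C^{(j)} = [[1,1],[0,(−2)^{1/p}]] (rows indexed by h, columns by q_j) if j ∈ Z and C^{(j)} = [[1,1],[1,1]] otherwise. -/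
open scoped BigOperators

/-- a single hyperedge correlator `Φ(q) = (−1)^{Π_{j∈Z} q_j}` of a
hypergraph state is exactly represented by one hidden unit whose coupling matrices are
`[[1,1],[0,(−2)^{1/p}]]` on the spins `j ∈ Z` (with `p = |Z|` and `r` a fixed `p`-th
root of `−2`) and the all-ones matrix elsewhere. -/
theorem hyperedge_single_hidden_unit (N : ℕ) (Z : Finset (Fin N)) (hZ : 0 < Z.card)
    (r : ℂ) (hr : r ^ Z.card = -2)
    (q : Fin N → ℕ) (hq : ∀ j, q j = 0 ∨ q j = 1)
    (C : Fin N → ℕ → ℕ → ℂ)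
    (hCin : ∀ j ∈ Z, C j 0 0 = 1 ∧ C j 0 1 = 1 ∧ C j 1 0 = 0 ∧ C j 1 1 = r)
    (hCout : ∀ j ∉ Z, ∀ h q', C j h q' = 1) :
    ∑ h ∈ Finset.range 2, ∏ j, C j h (q j) = (-1 : ℂ) ^ (∏ j ∈ Z, q j) := by
  have h0 : ∏ j, C j 0 (q j) = 1 := by
    apply Finset.prod_eq_one
    intro j _
    by_cases hj : j ∈ Z
    · obtain ⟨a, b, c, d⟩ := hCin j hj
      rcases hq j with h | h <;> rw [h] <;> assumption
    · exact hCout j hj 0 (q j)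
  have h1 : ∏ j, C j 1 (q j) = ∏ j ∈ Z, C j 1 (q j) := by
    rw [← Finset.prod_subset (Finset.subset_univ Z)]
    intro j _ hj
    exact hCout j hj 1 (q j)
  rw [Finset.sum_range_succ, Finset.sum_range_one, h0, h1]
  by_cases hall : ∀ j ∈ Z, q j = 1
  · have : ∏ j ∈ Z, C j 1 (q j) = r ^ Z.card := by
      rw [Finset.prod_congr rfl fun j hj => by rw [hall j hj, (hCin j hj).2.2.2],
        Finset.prod_const]
    rw [this, hr, Finset.prod_eq_one hall]
    ring
  · push_neg at hall
    obtain ⟨j, hjZ, hj1⟩ := hall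
    have hq0 : q j = 0 := (hq j).resolve_right hj1
    have : ∏ j ∈ Z, C j 1 (q j) = 0 :=
      Finset.prod_eq_zero hjZ (by rw [hq0, (hCin j hjZ).2.2.1])
    have hp0 : ∏ j ∈ Z, q j = 0 := Finset.prod_eq_zero hjZ hq0
    rw [this, hp0]
    ring
end
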